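/- Let H be a unicyclic graph, let w ∈ V(H), and let G be the unicyclic graph obtained from H by attaching a pendant path of length 2 at w: add two new vertices v and u together with the edges wv and vu. Then φ(G) ≥ φ(H) + 1, i.e., φ(G) ≥ φ(G − {u, v}) + 1. -/

import Mathlib

open SimpleGraph

/-- A dissociation set: a set of vertices inducing a subgraph of maximum degree at most 1,
i.e., every vertex of `S` has at most one neighbour inside `S`. -/
def IsDissoc {V : Type*} (G : SimpleGraph V) (S : Set V) : Prop :=
  ∀ v ∈ S, {u | u ∈ S ∧ G.Adj v u}.Subsingleton

/-- A maximal dissociation set: a dissociation set not properly contained in another one. -/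
def IsMaxDissoc {V : Type*} (G : SimpleGraph V) (S : Set V) : Prop :=
  IsDissoc G S ∧ ∀ T : Set V, IsDissoc G T → S ⊆ T → S = T

/-- `phi G` is the number of maximal dissociation sets of `G`. -/
noncomputable def phi {V : Type*} (G : SimpleGraph V) : ℕ :=
  {S : Set V | IsMaxDissoc G S}.ncard

/-- The number of maximal dissociation sets of `G` not containing `u`. -/
noncomputable def phiNot {V : Type*} (G : SimpleGraph V) (u : V) : ℕ :=
  {S : Set V | IsMaxDissoc G S ∧ u ∉ S}.ncard

/-- The number of maximal dissociation sets `S` of `G` with `u ∈ S` and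
`u` of degree 0 in the subgraph induced by `S`. -/
noncomputable def phi0 {V : Type*} (G : SimpleGraph V) (u : V) : ℕ :=
  {S : Set V | IsMaxDissoc G S ∧ u ∈ S ∧ ∀ x ∈ S, ¬ G.Adj u x}.ncard

/-- The number of maximal dissociation sets `S` of `G` with `u ∈ S` and
`u` of degree 1 in the subgraph induced by `S`. -/
noncomputable def phi1 {V : Type*} (G : SimpleGraph V) (u : V) : ℕ :=
  {S : Set V | IsMaxDissoc G S ∧ u ∈ S ∧ ∃! x, x ∈ S ∧ G.Adj u x}.ncard

/-- A unicyclic graph: a connected graph whose number of edges equals its number of vertices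
(equivalently, a connected graph with exactly one cycle). -/
def IsUnicyclic {V : Type*} [Fintype V] (G : SimpleGraph V) : Prop :=
  G.Connected ∧ G.edgeSet.ncard = Fintype.card V

/-- The tree `T(p,q)` (for `q ≤ p`): obtained from the star `K_{1,p}` by subdividing
exactly `q` of its edges.  The centre is `Sum.inl ()`, the `p` neighbours of the centre are
`Sum.inr (Sum.inl i)`, and for `j < q` the vertex `Sum.inr (Sum.inr j)` is the subdivision
pendant attached to the `j`-th neighbour.  It has `1 + p + q` vertices. -/
def treeT (p q : ℕ) (h : q ≤ p) : SimpleGraph (Unit ⊕ Fin p ⊕ Fin q) :=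
  SimpleGraph.fromRel fun a b =>
    (∃ i : Fin p, a = Sum.inl () ∧ b = Sum.inr (Sum.inl i)) ∨
    (∃ j : Fin q, a = Sum.inr (Sum.inl (Fin.castLE h j)) ∧ b = Sum.inr (Sum.inr j))

/-- The unicyclic graph `U(p,q)` (for `q ≤ p`): obtained by identifying one vertex of the
triangle `K₃` with the centre of `T(p,q)`.  The centre is `Sum.inl ()`, the two other triangle
vertices are `Sum.inr (Sum.inl 0)` and `Sum.inr (Sum.inl 1)`, and the copy of `T(p,q)` sits on
the remaining vertices.  It has `3 + p + q` vertices. -/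
def graphU (p q : ℕ) (h : q ≤ p) : SimpleGraph (Unit ⊕ Fin 2 ⊕ Fin p ⊕ Fin q) :=
  SimpleGraph.fromRel fun a b =>
    (a = Sum.inl () ∧ b = Sum.inr (Sum.inl 0)) ∨
    (a = Sum.inl () ∧ b = Sum.inr (Sum.inl 1)) ∨
    (a = Sum.inr (Sum.inl 0) ∧ b = Sum.inr (Sum.inl 1)) ∨
    (∃ i : Fin p, a = Sum.inl () ∧ b = Sum.inr (Sum.inr (Sum.inl i))) ∨
    (∃ j : Fin q, a = Sum.inr (Sum.inr (Sum.inl (Fin.castLE h j))) ∧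
      b = Sum.inr (Sum.inr (Sum.inr j)))

/-- The unicyclic graph obtained from the cycle `C_r` by attaching one pendant vertex
`Sum.inr j` to the cycle vertex `Sum.inl (f j)` for each `j : Fin t`.  For injective `f`
this is a member of the class `𝒰_{r,t}`. -/
def graphUrtF (r t : ℕ) (f : Fin t → Fin r) : SimpleGraph (Fin r ⊕ Fin t) :=
  SimpleGraph.fromRel fun a b =>
    (∃ i j : Fin r, a = Sum.inl i ∧ b = Sum.inl j ∧ (cycleGraph r).Adj i j) ∨
    (∃ j : Fin t, a = Sum.inl (f j) ∧ b = Sum.inr j)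

/-- The canonical member `U_{r,t}` of `𝒰_{r,t}` (for `t ≤ r`): the cycle `C_r` with one
pendant vertex attached to each of its first `t` vertices. -/
def graphUrt (r t : ℕ) (h : t ≤ r) : SimpleGraph (Fin r ⊕ Fin t) :=
  graphUrtF r t (Fin.castLE h)

/-- A caterpillar: a tree in which deleting all vertices of degree 1 leaves a path. -/
def IsCaterpillar {V : Type*} [Fintype V] (G : SimpleGraph V) : Prop :=
  G.IsTree ∧ ∃ m : ℕ,
    Nonempty ((G.induce {v | 2 ≤ (G.neighborSet v).ncard}) ≃g SimpleGraph.pathGraph m)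

/-- The graph `G₁` obtained from `U` by adding `k` new pendant vertices
`v₁ = Sum.inr 0, …, v_k = Sum.inr (k-1)`, each adjacent to `w`. -/
def addPendants {V : Type*} (U : SimpleGraph V) (w : V) (k : ℕ) : SimpleGraph (V ⊕ Fin k) :=
  SimpleGraph.fromRel fun a b =>
    (∃ x y, a = Sum.inl x ∧ b = Sum.inl y ∧ U.Adj x y) ∨
    (∃ j : Fin k, a = Sum.inl w ∧ b = Sum.inr j)

/-- The graph `G₂ = G₁ - w v_k + v₁ v_k`: obtained from `U` by attaching the pendant vertices
`v₁, …, v_{k-1}` to `w` and the vertex `v_k` to `v₁`. -/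
def swapPendant {V : Type*} (U : SimpleGraph V) (w : V) (k : ℕ) : SimpleGraph (V ⊕ Fin k) :=
  SimpleGraph.fromRel fun a b =>
    (∃ x y, a = Sum.inl x ∧ b = Sum.inl y ∧ U.Adj x y) ∨
    (∃ j : Fin k, j.val < k - 1 ∧ a = Sum.inl w ∧ b = Sum.inr j) ∨
    (∃ j₀ j₁ : Fin k, j₀.val = 0 ∧ j₁.val = k - 1 ∧ a = Sum.inr j₀ ∧ b = Sum.inr j₁)

/-- The graph obtained from `H` by attaching a pendant path of length 2 at `w`:
two new vertices `v = Sum.inr 0` and `u = Sum.inr 1` with edges `w v` and `v u`. -/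
def addPath2 {V : Type*} (H : SimpleGraph V) (w : V) : SimpleGraph (V ⊕ Fin 2) :=
  SimpleGraph.fromRel fun a b =>
    (∃ x y, a = Sum.inl x ∧ b = Sum.inl y ∧ H.Adj x y) ∨
    (a = Sum.inl w ∧ b = Sum.inr 0) ∨
    (a = Sum.inr 0 ∧ b = Sum.inr 1)

/-!
Writing `v = Sum.inr 0` and `u = Sum.inr 1`, every maximal dissociation set `S` of `H` extends to
one of `addPath2 H w` by adding `u`, and also `v` when `w ∉ S`; this extension is injective since
it restricts back to `S`. All these sets contain `u`, while a maximal dissociation set containing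
the edge `w v` cannot contain `u`, the second neighbour of `v`: that is the extra set.
-/

lemma Set.ncard_lt_ncard_of_injOn {α β : Type*} {s : Set α} {t : Set β} (f : α → β)
    (hf : Set.MapsTo f s t) (f_inj : Set.InjOn f s) {b : β} (hb : b ∈ t) (hbs : b ∉ f '' s)
    (ht : t.Finite := by toFinite_tac) : s.ncard < t.ncard := by
  rw [← f_inj.ncard_image]
  exact Set.ncard_lt_ncard ((Set.ssubset_iff_of_subset hf.image_subset).2 ⟨b, hb, hbs⟩) ht

section Dissociation

variable {V W : Type*} {G : SimpleGraph V}

lemma IsDissoc.eq_of_adj {S : Set V} (hS : IsDissoc G S) {z a b : V} (hz : z ∈ S) (ha : a ∈ S)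
    (hb : b ∈ S) (hza : G.Adj z a) (hzb : G.Adj z b) : a = b :=
  hS z hz ⟨ha, hza⟩ ⟨hb, hzb⟩

lemma IsDissoc.preimage {H : SimpleGraph W} (f : H ↪g G) {S : Set V} (hS : IsDissoc G S) :
    IsDissoc H (f ⁻¹' S) :=
  fun _ hz _ ha _ hb =>
    f.injective (hS.eq_of_adj hz ha.1 hb.1 (f.map_adj_iff.2 ha.2) (f.map_adj_iff.2 hb.2))

lemma isDissoc_pair (a b : V) : IsDissoc G {a, b} := by
  rintro z hz x ⟨hx, hzx⟩ y ⟨hy, hzy⟩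
  grind [hzx.ne, hzy.ne]

lemma IsDissoc.exists_isMaxDissoc_superset [Finite V] {S : Set V} (hS : IsDissoc G S) :
    ∃ T, IsMaxDissoc G T ∧ S ⊆ T := by
  obtain ⟨T, ⟨hT, hST⟩, hmax⟩ := Set.Finite.exists_maximalFor id {T | IsDissoc G T ∧ S ⊆ T}
    (Set.toFinite _) ⟨S, hS, subset_rfl⟩
  exact ⟨T, ⟨hT, fun T' hT' hTT' => hTT'.antisymm (hmax ⟨hT', hST.trans hTT'⟩ hTT')⟩, hST⟩

end Dissociation

namespace addPath2

variable {V : Type*} (H : SimpleGraph V) (w : V)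

@[simp]
lemma adj_inl_inl {x y : V} : (addPath2 H w).Adj (.inl x) (.inl y) ↔ H.Adj x y := by
  simpa [addPath2, H.adj_comm y x] using Adj.ne

@[simp]
lemma adj_inl_inr {x : V} {i : Fin 2} : (addPath2 H w).Adj (.inl x) (.inr i) ↔ x = w ∧ i = 0 := by
  simp [addPath2]

@[simp]
lemma adj_inr_inl {x : V} {i : Fin 2} : (addPath2 H w).Adj (.inr i) (.inl x) ↔ x = w ∧ i = 0 := by
  rw [adj_comm, adj_inl_inr]

@[simp]
lemma adj_inr_inr {i j : Fin 2} : (addPath2 H w).Adj (.inr i) (.inr j) ↔ i ≠ j := by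
  fin_cases i <;> fin_cases j <;> simp [addPath2]

def inlEmbedding : H ↪g addPath2 H w :=
  ⟨Function.Embedding.inl, adj_inl_inl H w⟩

def extend (S : Set V) : Set (V ⊕ Fin 2) :=
  Sum.inl '' S ∪ Sum.inr '' {i | i = 1 ∨ w ∉ S}

variable {H w}

@[simp]
lemma inl_mem_extend {S : Set V} {x : V} : Sum.inl x ∈ extend w S ↔ x ∈ S := by
  simp [extend]

@[simp]
lemma inr_mem_extend {S : Set V} {i : Fin 2} : Sum.inr i ∈ extend w S ↔ i = 1 ∨ w ∉ S := by
  simp [extend]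

lemma preimage_inl_extend (S : Set V) : Sum.inl ⁻¹' extend w S = S := by
  ext; simp

/-- The only edge of `addPath2 H w` between `H` and the new path is `w v`, and `extend w S` never
contains both of its ends. -/
lemma isDissoc_extend {S : Set V} (hS : IsDissoc H S) : IsDissoc (addPath2 H w) (extend w S) := by
  rintro (x | i) hz (a | a) ⟨ha, hza⟩ (b | b) ⟨hb, hzb⟩ <;> simp_all
  case inl.inl.inl => exact hS.eq_of_adj hz ha hb hza hzb
  case inr.inr.inr => omega

lemma isMaxDissoc_extend {S : Set V} (hS : IsMaxDissoc H S) :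
    IsMaxDissoc (addPath2 H w) (extend w S) := by
  refine ⟨isDissoc_extend hS.1, fun T hT hST => hST.antisymm ?_⟩
  have hTS : inlEmbedding H w ⁻¹' T = S :=
    (hS.2 _ (hT.preimage (inlEmbedding H w)) fun x hx => hST (inl_mem_extend.2 hx)).symm
  rintro (x | i) hz
  · exact inl_mem_extend.2 (hTS.subset hz)
  · refine inr_mem_extend.2 (or_iff_not_imp_right.2 fun hw => ?_)
    have hwT : Sum.inl w ∈ T := hST (inl_mem_extend.2 (not_not.1 hw))
    have h1T : Sum.inr 1 ∈ T := hST (inr_mem_extend.2 (.inl rfl))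
    by_contra hi
    obtain rfl : i = 0 := by omega
    exact absurd (hT.eq_of_adj hz hwT h1T (by simp) (by simp)) (by simp)

end addPath2

theorem stmt19_general {V : Type*} [Fintype V] (H : SimpleGraph V) (w : V) :
    phi H + 1 ≤ phi (addPath2 H w) := by
  obtain ⟨S, hS, hwv⟩ :=
    (isDissoc_pair (G := addPath2 H w) (.inl w) (.inr 0)).exists_isMaxDissoc_superset
  have hu : Sum.inr 1 ∉ S := fun hu =>
    absurd (hS.1.eq_of_adj (hwv (.inr rfl)) (hwv (.inl rfl)) hu (by simp) (by simp)) (by simp)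
  refine Set.ncard_lt_ncard_of_injOn (addPath2.extend w) (fun _ => addPath2.isMaxDissoc_extend)
    ?_ hS ?_
  · intro S₁ _ S₂ _ h
    rw [← addPath2.preimage_inl_extend S₁, h, addPath2.preimage_inl_extend]
  · rintro ⟨T, -, rfl⟩
    exact hu (by simp)

/-- let `H` be a unicyclic graph, `w ∈ V(H)`, and `G` the unicyclic graph
obtained from `H` by attaching a pendant path of length 2 at `w` (new vertices `v, u` with
edges `w v` and `v u`). Then `φ(G) ≥ φ(H) + 1`. -/
theorem stmt19 {V : Type*} [Fintype V] (H : SimpleGraph V) (hH : IsUnicyclic H) (w : V) :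
    phi H + 1 ≤ phi (addPath2 H w) :=
  stmt19_general H w
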